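/- Let $\pi$ be an overpartition in $\overline{\mathcal{B}}_0(\alpha_1,\ldots,\alpha_\lambda;\eta,k,r)$ where $k-1 > \lambda$. Then $g(\pi) \geq \overline{\eta}$, i.e., every part starting a $(k-1)$-band of $\pi$ has size at least $\eta$; moreover, if the smallest overlined part of $\pi$ divisible by $\eta$ exceeds $\overline{\eta}$ (or no such part exists), then $g(\pi) \geq \eta$, i.e., any part starting a $(k-1)$-band is at least the non-overlined part $\eta$ in the ordering $\bar{1}<1<\bar{2}<2<\cdots$. -/

import Mathlib

/-- A part of an overpartition: a size together with a flag telling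
whether the part is overlined. -/
structure OPart where
  size : ℕ
  ovl : Bool
deriving DecidableEq

/-- The value of a part in the ordering `1̄ < 1 < 2̄ < 2 < ⋯`:
an overlined part of size `t` has value `2t - 1`, a non-overlined one `2t`. -/
def OPart.val (p : OPart) : ℕ := 2 * p.size - (if p.ovl then 1 else 0)

def dpart : OPart := ⟨0, false⟩

/-- value of the `i`-th part (0-based). -/
def pval (π : List OPart) (i : ℕ) : ℕ := (π.getD i dpart).val

def pover (π : List OPart) (i : ℕ) : Bool := (π.getD i dpart).ovl

def psize (π : List OPart) (i : ℕ) : ℕ := (π.getD i dpart).size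

/-- the weight `|π|`: the sum of the sizes of the parts. -/
def wt (π : List OPart) : ℕ := (π.map OPart.size).sum

/-- An overpartition: a sequence of positive parts, non-increasing in the
ordering `1̄ < 1 < 2̄ < 2 < ⋯`, in which each size is overlined at most once
(the overlined copy, being smallest among equal sizes, is the last occurrence). -/
def IsOverPartition (π : List OPart) : Prop :=
  List.Pairwise (fun p q : OPart => q.val ≤ p.val) π ∧
  (∀ p ∈ π, 0 < p.size) ∧
  (∀ t : ℕ, π.count (⟨t, true⟩ : OPart) ≤ 1)

/-- `{π_{i+l}}_{0 ≤ l ≤ m-1}` is an `m`-band of `π`: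
`π_i ≤ π_{i+m-1} + η`, with strict inequality if `π_i` is overlined. -/
def IsBand (η : ℕ) (π : List OPart) (m i : ℕ) : Prop :=
  i + m ≤ π.length ∧
  pval π i ≤ pval π (i + m - 1) + 2 * η ∧
  (pover π i = true → pval π i < pval π (i + m - 1) + 2 * η)

/-- `V̄_π(N)`: the number of overlined parts of value at most `N`
whose size is not divisible by `η`. -/
def Vbar (η : ℕ) (π : List OPart) (N : ℕ) : ℕ :=
  π.countP (fun p => p.ovl && decide (p.val ≤ N) && !(decide (p.size % η = 0)))

/-- `Ō_π(N)`: the number of overlined parts of value at least `N`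
whose size is divisible by `η`. -/
def Obar (η : ℕ) (π : List OPart) (N : ℕ) : ℕ :=
  π.countP (fun p => p.ovl && decide (N ≤ p.val) && decide (p.size % η = 0))

/-- `f_{≤η}(π)`: the number of parts not exceeding `η`. -/
def fLe (η : ℕ) (π : List OPart) : ℕ :=
  π.countP (fun p => decide (p.val ≤ 2 * η))

/-- `[|π_i|/η] + ⋯ + [|π_{i+m-1}|/η]`. -/
def bandSum (η : ℕ) (π : List OPart) (i m : ℕ) : ℕ :=
  ∑ l ∈ Finset.range m, psize π (i + l) / η

/-- Every part is congruent to `0, α_1, …, α_λ` modulo `η`. -/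
def CongParts (α : ℕ → ℕ) (lam η : ℕ) (π : List OPart) : Prop :=
  ∀ p ∈ π, p.size % η = 0 ∨ ∃ s, 1 ≤ s ∧ s ≤ lam ∧ p.size % η = α s

/-- The class `B̄(α_1,…,α_λ; η, k, r)`: conditions (1)–(4) of the definition
of `B̄₀`. -/
def InBbar (α : ℕ → ℕ) (lam η k r : ℕ) (π : List OPart) : Prop :=
  IsOverPartition π ∧
  CongParts α lam η π ∧
  (∀ p ∈ π, p.ovl = false → η ∣ p.size) ∧
  (∀ i, i + k ≤ π.length →
    pval π (i + k - 1) + 2 * η ≤ pval π i ∧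
    (pover π i = false → pval π (i + k - 1) + 2 * η < pval π i)) ∧
  fLe η π ≤ r

/-- An `m`-band at `i` is even:
`[|π_i|/η]+⋯+[|π_{i+m-1}|/η] ≡ r - 1 + V̄_π(π_i) + Ō_π(π_{i+m-1}) (mod 2)`. -/
def EvenBand (η r : ℕ) (π : List OPart) (m i : ℕ) : Prop :=
  Int.ModEq 2 (bandSum η π i m)
    ((r : ℤ) - 1 + (Vbar η π (pval π i) : ℤ) + (Obar η π (pval π (i + m - 1)) : ℤ))

/-- Condition (5) of the definition of `B̄₀`. -/
def Cond5 (η k r : ℕ) (π : List OPart) : Prop :=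
  fLe η π = r → (⟨η, true⟩ : OPart) ∉ π →
    ∃ i, IsBand η π (k - 1) i ∧ pval π i < 2 * (2 * η) - 1

/-- The class `B̄₀(α_1,…,α_λ; η, k, r)`: conditions (1)–(6). -/
def InB0 (α : ℕ → ℕ) (lam η k r : ℕ) (π : List OPart) : Prop :=
  InBbar α lam η k r π ∧ Cond5 η k r π ∧
  ∀ i, IsBand η π (k - 1) i → EvenBand η r π (k - 1) i

/-- `s(π) > t̄η`: every overlined part divisible by `η` has size `> tη`. -/
def SGt (η t : ℕ) (π : List OPart) : Prop :=
  ∀ p ∈ π, p.ovl = true → η ∣ p.size → t * η < p.size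

/-- `s(π) = t̄η`. -/
def SEq (η t : ℕ) (π : List OPart) : Prop :=
  (⟨t * η, true⟩ : OPart) ∈ π ∧
  ∀ p ∈ π, p.ovl = true → η ∣ p.size → t * η ≤ p.size

/-- `g(π) ≥ x` (value `x`): every part starting a `(k-1)`-band has value `≥ x`. -/
def GGe (η k : ℕ) (π : List OPart) (x : ℕ) : Prop :=
  ∀ i, IsBand η π (k - 1) i → x ≤ pval π i

/-- `g(π) < x`: some part starting a `(k-1)`-band has value `< x`. -/
def GLt (η k : ℕ) (π : List OPart) (x : ℕ) : Prop :=
  ∃ i, IsBand η π (k - 1) i ∧ pval π i < x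

/-- `π ∈ B̄₀^=(α_1,…,α_λ; η,k,r | t)`. -/
def InBeq (α : ℕ → ℕ) (lam η k r t : ℕ) (π : List OPart) : Prop :=
  InB0 α lam η k r π ∧
  ((SEq η t π ∧ GGe η k π (2 * (t * η) - 1)) ∨
   (SGt η t π ∧ GGe η k π (2 * (t * η)) ∧ GLt η k π (2 * ((t + 1) * η) - 1)))

/-- `π ∈ B̄₀^>(α_1,…,α_λ; η,k,r | t)`. -/
def InBgt (α : ℕ → ℕ) (lam η k r t : ℕ) (π : List OPart) : Prop :=
  InB0 α lam η k r π ∧ SGt η t π ∧ GGe η k π (2 * ((t + 1) * η) - 1)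

/-- An `m`-band belonging to the closed interval `[(t-1)η, (t+1)η]`. -/
def BandInC (η t : ℕ) (π : List OPart) (m i : ℕ) : Prop :=
  IsBand η π m i ∧ 2 * ((t - 1) * η) ≤ pval π (i + m - 1) ∧
  pval π i ≤ 2 * ((t + 1) * η)

/-- An `m`-band belonging to `[(t-1)η, \overline{(t+1)η})`. -/
def BandInO (η t : ℕ) (π : List OPart) (m i : ℕ) : Prop :=
  IsBand η π m i ∧ 2 * ((t - 1) * η) ≤ pval π (i + m - 1) ∧
  pval π i < 2 * ((t + 1) * η) - 1

/-- An `m`-band at `i` is of type N. -/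
def TypeN (η r t : ℕ) (π : List OPart) (m i : ℕ) : Prop :=
  Int.ModEq 2 (bandSum η π i m)
    ((t : ℤ) + (r : ℤ) - 1 + (Vbar η π (pval π i) : ℤ) +
      (Obar η π (pval π (i + m - 1)) : ℤ))

/-- `π` is obtained from `μ` by inserting the part `p`. -/
def InsertPart (μ : List OPart) (p : OPart) (π : List OPart) : Prop :=
  ∃ l1 l2, μ = l1 ++ l2 ∧ π = l1 ++ p :: l2

/-- The `(k-1)`-reduction `D_t` as a relation: `μ = D_t(π)`. -/
def DtRel (η t : ℕ) (π μ : List OPart) : Prop :=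
  ((⟨t * η, true⟩ : OPart) ∈ π ∧ InsertPart μ ⟨t * η, true⟩ π) ∨
  ((⟨t * η, true⟩ : OPart) ∉ π ∧ InsertPart μ ⟨t * η, false⟩ π)

/-- `μ` has a `(k-2)`-band belonging to `[(t-1)η, \overline{(t+1)η})` of type N. -/
def HasTypeNBand (η r k t : ℕ) (μ : List OPart) : Prop :=
  ∃ i, BandInO η t μ (k - 2) i ∧ TypeN η r t μ (k - 2) i

/-- The `(k-1)`-augmentation `C_t` as a relation: `π = C_t(μ)`. -/
def CtRel (η r k t : ℕ) (μ π : List OPart) : Prop :=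
  (HasTypeNBand η r k t μ ∧ InsertPart μ ⟨t * η, false⟩ π) ∨
  (¬ HasTypeNBand η r k t μ ∧ InsertPart μ ⟨t * η, true⟩ π)

/-- `B₁`-type overpartitions: conditions (1)–(4), no overlined part divisible
by `η`, and at most `r - 1` parts not exceeding `η`. -/
def InB1over (α : ℕ → ℕ) (lam η k r : ℕ) (π : List OPart) : Prop :=
  InBbar α lam η k r π ∧ (∀ p ∈ π, p.ovl = true → ¬ η ∣ p.size) ∧ fLe η π < r

/-- `D_η`: partitions into distinct parts divisible by `η`. -/
def InD (η : ℕ) (τ : List ℕ) : Prop :=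
  List.Pairwise (· > ·) τ ∧ ∀ x ∈ τ, 0 < x ∧ η ∣ x

/-- Bressoud's class `B₁(α_1,…,α_λ; η,k,r)` of ordinary partitions. -/
def InB1nat (α : ℕ → ℕ) (lam η k r : ℕ) (σ : List ℕ) : Prop :=
  List.Pairwise (· ≥ ·) σ ∧ (∀ x ∈ σ, 0 < x) ∧
  (∀ x ∈ σ, x % η = 0 ∨ ∃ s, 1 ≤ s ∧ s ≤ lam ∧ x % η = α s) ∧
  (∀ x : ℕ, ¬ η ∣ x → σ.count x ≤ 1) ∧
  (∀ i, i + k ≤ σ.length →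
    σ.getD (i + k - 1) 0 + η ≤ σ.getD i 0 ∧
    (η ∣ σ.getD i 0 → σ.getD (i + k - 1) 0 + η < σ.getD i 0)) ∧
  σ.countP (fun x => decide (x ≤ η)) < r

/-- The class `Ā₀(α_1,…,α_λ; η,k,r)`. Congruence conditions involving `η/2`
are stated with sizes doubled. -/
def InA0 (α : ℕ → ℕ) (lam η k r : ℕ) (π : List OPart) : Prop :=
  IsOverPartition π ∧
  CongParts α lam η π ∧
  (Even lam →
    ∀ p ∈ π, p.ovl = false →
      η ∣ p.size ∧
      ¬ (2 * η * (2 * k - lam - 1) ∣ 2 * p.size) ∧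
      2 * p.size % (2 * η * (2 * k - lam - 1)) ≠ η * (2 * r - lam) ∧
      2 * p.size % (2 * η * (2 * k - lam - 1)) ≠
        2 * η * (2 * k - lam - 1) - η * (2 * r - lam)) ∧
  (¬ Even lam →
    (∀ p ∈ π, p.ovl = false →
      η ∣ 2 * p.size ∧
      p.size % (2 * η) ≠ η ∧
      ¬ (2 * η * (2 * k - lam - 1) ∣ 2 * p.size) ∧
      2 * p.size % (2 * η * (2 * k - lam - 1)) ≠ η * (2 * r - lam) ∧
      2 * p.size % (2 * η * (2 * k - lam - 1)) ≠
        2 * η * (2 * k - lam - 1) - η * (2 * r - lam)) ∧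
    (∀ p ∈ π, p.ovl = true → 2 * p.size % (2 * η) ≠ η))

/-
A part smaller than `η` cannot be non-overlined (non-overlined parts are multiples of `η`), so it
is an overlined part whose size is one of `α_1, …, α_λ`; as each size is overlined at most once,
`π` has at most `λ` parts below `η`. A `(k-1)`-band starting below `η̄` would consist of
`k - 1 > λ` such parts, so `g(π) ≥ η̄`. If `g(π) = η̄`, the band starts at the overlined part `η`,
which `s(π) > η̄` excludes.
-/

namespace OPart

lemma size_lt_of_val_lt {p : OPart} {η : ℕ} (h : p.val < 2 * η - 1) : p.size < η := by
  unfold val at h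
  split_ifs at h <;> omega

lemma eq_mk_true_of_val_eq {p : OPart} {t : ℕ} (ht : 0 < t) (h : p.val = 2 * t - 1) :
    p = ⟨t, true⟩ := by
  obtain ⟨s, _ | _⟩ := p <;> simp only [val, Bool.false_eq_true, ite_true, ite_false] at h
  · omega
  · congr; omega

lemma eq_of_ovl_of_size_eq {p q : OPart} (hp : p.ovl = true) (hq : q.ovl = true)
    (h : p.size = q.size) : p = q := by
  cases p; cases q; simp_all

end OPart

lemma getD_mem_of_lt {π : List OPart} {i : ℕ} (hi : i < π.length) : π.getD i dpart ∈ π := by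
  rw [List.getD_eq_getElem _ _ hi]
  exact List.getElem_mem hi

namespace IsOverPartition

variable {π : List OPart}

lemma val_le_pval_of_mem_drop (hπ : IsOverPartition π) {i : ℕ} (hi : i < π.length)
    {q : OPart} (hq : q ∈ π.drop i) : q.val ≤ pval π i := by
  have hsorted := hπ.1.sublist (List.drop_sublist i π)
  rw [List.drop_eq_getElem_cons hi] at hq hsorted
  rw [pval, List.getD_eq_getElem _ _ hi]
  rcases List.mem_cons.1 hq with rfl | hq
  · exact le_rfl
  · exact List.rel_of_pairwise_cons hsorted hq

lemma countP_size_lt_le {α : ℕ → ℕ} {lam η : ℕ} (hπ : IsOverPartition π)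
    (hcong : CongParts α lam η π) (hdvd : ∀ p ∈ π, p.ovl = false → η ∣ p.size) :
    π.countP (fun p => p.size < η) ≤ lam := by
  set L := π.filter (fun p => p.size < η)
  have hL : ∀ p ∈ L, p ∈ π ∧ p.size < η := fun p hp => by simpa [L] using hp
  have hovl : ∀ p ∈ L, p.ovl = true := fun p hp => by
    obtain ⟨hmem, hlt⟩ := hL p hp
    by_contra h
    have := Nat.le_of_dvd (hπ.2.1 p hmem) (hdvd p hmem (by simpa using h))
    omega
  have hnodup : L.Nodup := List.nodup_iff_count_le_one.2 fun p => by
    by_cases hp : p ∈ L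
    · have hp' : p = ⟨p.size, true⟩ := OPart.eq_of_ovl_of_size_eq (hovl p hp) rfl rfl
      rw [hp']
      exact ((List.filter_sublist (l := π)).count_le _).trans (hπ.2.2 _)
    · simp [List.count_eq_zero_of_not_mem hp]
  have hsizes : (L.map OPart.size).Nodup :=
    hnodup.map_on fun p hp q hq => OPart.eq_of_ovl_of_size_eq (hovl p hp) (hovl q hq)
  have hsub : (L.map OPart.size).toFinset ⊆ (Finset.Icc 1 lam).image α := fun x hx => by
    obtain ⟨p, hp, rfl⟩ := List.mem_map.1 (List.mem_toFinset.1 hx)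
    obtain ⟨hmem, hlt⟩ := hL p hp
    rcases hcong p hmem with h | ⟨s, hs1, hs2, hs⟩
    · rw [Nat.mod_eq_of_lt hlt] at h
      exact absurd h (hπ.2.1 p hmem).ne'
    · rw [Nat.mod_eq_of_lt hlt] at hs
      exact Finset.mem_image.2 ⟨s, Finset.mem_Icc.2 ⟨hs1, hs2⟩, hs.symm⟩
  calc π.countP (fun p => p.size < η) = (L.map OPart.size).toFinset.card := by
        rw [List.toFinset_card_of_nodup hsizes, List.length_map, List.countP_eq_length_filter]
    _ ≤ ((Finset.Icc 1 lam).image α).card := Finset.card_le_card hsub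
    _ ≤ lam := Finset.card_image_le.trans (by simp)

lemma le_countP_size_lt_of_pval_lt (hπ : IsOverPartition π) {η i m : ℕ}
    (hlen : i + m ≤ π.length) (hm : 0 < m) (hsmall : pval π i < 2 * η - 1) :
    m ≤ π.countP (fun p => p.size < η) := by
  set L := (π.drop i).take m
  have hLlen : L.length = m := by
    simp only [L, List.length_take, List.length_drop]; omega
  have hall : ∀ q ∈ L, q.size < η := fun q hq =>
    OPart.size_lt_of_val_lt <| (hπ.val_le_pval_of_mem_drop (by omega)
      (List.mem_of_mem_take hq)).trans_lt hsmall
  calc m = L.countP (fun p => p.size < η) := by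
        rw [List.countP_eq_length.2 (by simpa using hall), hLlen]
    _ ≤ π.countP (fun p => p.size < η) :=
        ((List.take_sublist m _).trans (List.drop_sublist i π)).countP_le

end IsOverPartition

theorem stmt_16_general (α : ℕ → ℕ) (lam η k r : ℕ)
    (hlk : lam + 1 < k)
    (π : List OPart) (hπ : InB0 α lam η k r π) :
    GGe η k π (2 * η - 1) ∧ (SGt η 1 π → GGe η k π (2 * η)) := by
  obtain ⟨⟨hop, hcong, hdvd, -, -⟩, -, -⟩ := hπ
  have hge : GGe η k π (2 * η - 1) := fun i hband => by
    by_contra! hsmall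
    have := hop.le_countP_size_lt_of_pval_lt hband.1 (by omega) hsmall
    have := hop.countP_size_lt_le hcong hdvd
    omega
  refine ⟨hge, fun hs i hband => ?_⟩
  by_contra! hlt
  have hi : i < π.length := by have := hband.1; omega
  have hge_i := hge i hband
  have hpart : π.getD i dpart = ⟨η, true⟩ :=
    OPart.eq_mk_true_of_val_eq (by omega) (by unfold pval at hge_i hlt; omega)
  have := hs _ (getD_mem_of_lt hi) (by rw [hpart]) (by rw [hpart])
  rw [hpart, one_mul] at this
  exact lt_irrefl η this

theorem stmt_16 (α : ℕ → ℕ) (lam η k r : ℕ)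
    (hη : 0 < η)
    (hαpos : ∀ i, 1 ≤ i → i ≤ lam → 0 < α i ∧ α i < η)
    (hαmono : ∀ i j, 1 ≤ i → i < j → j ≤ lam → α i < α j)
    (hαsym : ∀ i, 1 ≤ i → i ≤ lam → α i = η - α (lam + 1 - i))
    (hrk : r < k) (hlr : lam ≤ r) (hlk : lam + 1 < k)
    (π : List OPart) (hπ : InB0 α lam η k r π) :
    GGe η k π (2 * η - 1) ∧ (SGt η 1 π → GGe η k π (2 * η)) :=
  stmt_16_general α lam η k r hlk π hπ
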